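/- arXiv:2505.22325 — 3 statements merged into one kernel-verified Lean document; each statement's English description precedes it below -/
import Mathlib

section
/- Let q ∈ [1,∞]. For every signal f : V → X, the graph Fourier transform satisfies ‖f̂‖_q ≤ κ_q(U*)·‖f‖_1 and ‖f‖_q ≤ κ_q(U)·‖f̂‖_1. Moreover, if X is nontrivial, the first bound is sharp: the operator norm of 𝓕 : L^1(V,X) → L^q(V,X) equals κ_q(U*), i.e., sup over nonzero f of ‖f̂‖_q/‖f‖_1 equals κ_q(U*). -/
open Finset
open scoped ENNReal

/-- The `L^p` norm of a signal `f : Fin N → E` (sup-norm when `p = ∞`). -/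
noncomputable def gsNorm {E : Type*} [NormedAddCommGroup E] {N : ℕ} (p : ℝ≥0∞)
    (f : Fin N → E) : ℝ :=
  if p = ∞ then ⨆ n, ‖f n‖ else (∑ n, ‖f n‖ ^ p.toReal) ^ (1 / p.toReal)

/-- `u k` is the `k`-th column of a unitary matrix, i.e. the family of columns is
orthonormal for the standard inner product on `𝕂^N` (hence an orthonormal basis). -/
def OrthoBasis {𝕂 : Type*} [RCLike 𝕂] {N : ℕ} (u : Fin N → Fin N → 𝕂) : Prop :=
  ∀ k l : Fin N, ∑ n, (starRingEnd 𝕂) (u k n) * u l n = if k = l then (1 : 𝕂) else 0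

/-- Graph Fourier transform: `f̂ k = ∑ n, conj (u k n) • f n`. -/
noncomputable def gft {𝕂 : Type*} [RCLike 𝕂] {X : Type*} [NormedAddCommGroup X]
    [NormedSpace 𝕂 X] {N : ℕ} (u : Fin N → Fin N → 𝕂) (f : Fin N → X) : Fin N → X :=
  fun k => ∑ n, (starRingEnd 𝕂) (u k n) • f n

/-- `p`-coherence `κ_p(U)`: the maximum of the `ℓ^p` norms of the columns of `U`. -/
noncomputable def coh {𝕂 : Type*} [RCLike 𝕂] {N : ℕ} (p : ℝ≥0∞)
    (u : Fin N → Fin N → 𝕂) : ℝ :=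
  ⨆ k, gsNorm p (u k)

/-- Mixed norm `‖U‖_{p,q}`: the `ℓ^q` norm of the vector of `ℓ^p` norms of the columns. -/
noncomputable def mixNorm {𝕂 : Type*} [RCLike 𝕂] {N : ℕ} (p q : ℝ≥0∞)
    (u : Fin N → Fin N → 𝕂) : ℝ :=
  gsNorm q (fun k => gsNorm p (u k))

/-- Graph convolution of a scalar signal `α` with a signal `f`:
`(α*f)(n) = ∑ k, u k n • (α̂ k • f̂ k)`. -/
noncomputable def gconv {𝕂 : Type*} [RCLike 𝕂] {X : Type*} [NormedAddCommGroup X]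
    [NormedSpace 𝕂 X] {N : ℕ} (u : Fin N → Fin N → 𝕂) (α : Fin N → 𝕂)
    (f : Fin N → X) : Fin N → X :=
  fun n => ∑ k, u k n • (gft u α k • gft u f k)

/-- Graph translation operator `T_m f (n) = ∑ k, (u k n * conj (u k m)) • f̂ k`. -/
noncomputable def gtrans {𝕂 : Type*} [RCLike 𝕂] {X : Type*} [NormedAddCommGroup X]
    [NormedSpace 𝕂 X] {N : ℕ} (u : Fin N → Fin N → 𝕂) (m : Fin N)
    (f : Fin N → X) : Fin N → X :=
  fun n => ∑ k, (u k n * (starRingEnd 𝕂) (u k m)) • gft u f k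

/-!
Both bounds are Minkowski's inequality in `ℓ^q`: `f̂ = ∑ₙ conj (u(n)) • f(n)` and, by the
inversion formula `f = ∑ₖ u_k • f̂(k)` (the rows of a unitary matrix are orthonormal too),
`f` are sums of rank-one signals `a • x`, and `‖a • x‖_q = ‖a‖_q ‖x‖`. A delta signal at a row
of maximal `q`-norm attains the first bound.
-/

section gsNorm

variable {E : Type*} [NormedAddCommGroup E] {N : ℕ}

theorem gsNorm_eq_norm_toLp {p : ℝ≥0∞} (hp : p ≠ 0) (f : Fin N → E) :
    gsNorm p f = ‖WithLp.toLp p f‖ := by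
  show _ = ite _ _ _
  rw [if_neg hp]
  rfl

theorem gsNorm_congr {F : Type*} [NormedAddCommGroup F] (p : ℝ≥0∞) {f : Fin N → E}
    {g : Fin N → F} (h : ∀ n, ‖f n‖ = ‖g n‖) : gsNorm p f = gsNorm p g := by
  simp only [gsNorm, h]

theorem gsNorm_one (f : Fin N → E) : gsNorm 1 f = ∑ n, ‖f n‖ := by
  simp [gsNorm]

theorem gsNorm_single (n : Fin N) (x : E) : gsNorm 1 (Pi.single n x) = ‖x‖ := by
  rw [gsNorm_one, Finset.sum_eq_single n (fun m _ hm => by simp [hm]) (by simp)]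
  simp

variable {𝕂 : Type*} [RCLike 𝕂] {X : Type*} [NormedAddCommGroup X] [NormedSpace 𝕂 X]

theorem gsNorm_smul_const {p : ℝ≥0∞} (hp : 1 ≤ p) (a : Fin N → 𝕂) (x : X) :
    gsNorm p (fun n => a n • x) = gsNorm p a * ‖x‖ := by
  have := Fact.mk hp
  have hp0 : p ≠ 0 := (zero_lt_one.trans_le hp).ne'
  calc gsNorm p (fun n => a n • x) = gsNorm p (‖x‖ • a) :=
        gsNorm_congr p fun n => by simp [norm_smul, mul_comm]
    _ = gsNorm p a * ‖x‖ := by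
        rw [gsNorm_eq_norm_toLp hp0, gsNorm_eq_norm_toLp hp0, WithLp.toLp_smul, norm_smul,
          norm_norm, mul_comm]

theorem gsNorm_conj (p : ℝ≥0∞) (a : Fin N → 𝕂) :
    gsNorm p (fun n => starRingEnd 𝕂 (a n)) = gsNorm p a :=
  gsNorm_congr p fun n => RCLike.norm_conj (a n)

theorem gsNorm_sum_smul_le_coh_mul {p : ℝ≥0∞} (hp : 1 ≤ p) (a : Fin N → Fin N → 𝕂)
    (g : Fin N → X) :
    gsNorm p (fun k => ∑ i, a i k • g i) ≤ coh p a * gsNorm 1 g := by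
  have := Fact.mk hp
  have hp0 : p ≠ 0 := (zero_lt_one.trans_le hp).ne'
  have hsum : WithLp.toLp p (fun k => ∑ i, a i k • g i)
      = ∑ i, WithLp.toLp p (fun k => a i k • g i) := by
    ext k; simp
  calc gsNorm p (fun k => ∑ i, a i k • g i)
      ≤ ∑ i, gsNorm p (fun k => a i k • g i) := by
        simp only [gsNorm_eq_norm_toLp hp0, hsum]
        exact norm_sum_le _ _
    _ = ∑ i, gsNorm p (a i) * ‖g i‖ := by simp only [gsNorm_smul_const hp]
    _ ≤ ∑ i, coh p a * ‖g i‖ := by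
        gcongr with i
        exact le_ciSup (f := fun i => gsNorm p (a i)) (Set.finite_range _).bddAbove i
    _ = coh p a * gsNorm 1 g := by rw [gsNorm_one, mul_sum]

theorem coh_conj (p : ℝ≥0∞) (u : Fin N → Fin N → 𝕂) :
    coh p (fun i k => starRingEnd 𝕂 (u i k)) = coh p u := by
  simp only [coh, gsNorm_conj]

theorem exists_gsNorm_eq_coh (hN : 0 < N) (p : ℝ≥0∞) (u : Fin N → Fin N → 𝕂) :
    ∃ i, gsNorm p (u i) = coh p u :=
  have := Fin.pos_iff_nonempty.mp hN
  exists_eq_ciSup_of_finite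

end gsNorm

namespace OrthoBasis

variable {𝕂 : Type*} [RCLike 𝕂] {N : ℕ} {u : Fin N → Fin N → 𝕂}

theorem sum_mul_conj (hU : OrthoBasis u) (n m : Fin N) :
    ∑ k, u k n * starRingEnd 𝕂 (u k m) = if n = m then 1 else 0 := by
  let A : Matrix (Fin N) (Fin N) 𝕂 := Matrix.of fun n k => u k n
  have hcols : star A * A = 1 := by
    ext k l
    simpa [A, Matrix.mul_apply, Matrix.one_apply] using hU k l
  have hrows := congrFun (congrFun
    (Matrix.mem_unitaryGroup_iff.mp (Matrix.mem_unitaryGroup_iff'.mpr hcols)) n) m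
  simpa [A, Matrix.mul_apply, Matrix.one_apply] using hrows

theorem gft_inversion {X : Type*} [NormedAddCommGroup X] [NormedSpace 𝕂 X] (hU : OrthoBasis u)
    (f : Fin N → X) : (fun n => ∑ k, u k n • gft u f k) = f := by
  funext n
  calc ∑ k, u k n • gft u f k = ∑ m, (∑ k, u k n * starRingEnd 𝕂 (u k m)) • f m := by
        simp only [gft, smul_sum, smul_smul, sum_smul]
        exact sum_comm
    _ = f n := by simp [hU.sum_mul_conj, ite_smul]

end OrthoBasis

theorem gft_single {𝕂 : Type*} [RCLike 𝕂] {X : Type*} [NormedAddCommGroup X] [NormedSpace 𝕂 X]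
    {N : ℕ} (u : Fin N → Fin N → 𝕂) (m : Fin N) (x : X) :
    gft u (Pi.single m x) = fun k => starRingEnd 𝕂 (u k m) • x := by
  funext k
  rw [gft, sum_eq_single m (fun n _ hn => by simp [hn]) (by simp), Pi.single_eq_same]

theorem gft_norm_one_to_q_general {𝕂 : Type*} [RCLike 𝕂] {X : Type*} [NormedAddCommGroup X]
    [NormedSpace 𝕂 X] {N : ℕ} (hN : 0 < N)
    (u : Fin N → Fin N → 𝕂) (hU : OrthoBasis u)
    (q : ℝ≥0∞) (hq : 1 ≤ q) :
    (∀ f : Fin N → X, gsNorm q (gft u f) ≤ coh q (fun n k => u k n) * gsNorm 1 f) ∧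
    (∀ f : Fin N → X, gsNorm q f ≤ coh q u * gsNorm 1 (gft u f)) ∧
    (Nontrivial X →
      ∃ f : Fin N → X, f ≠ 0 ∧ gsNorm q (gft u f) = coh q (fun n k => u k n) * gsNorm 1 f) := by
  refine ⟨fun f => ?_, fun f => ?_, fun _ => ?_⟩
  · rw [← coh_conj]
    exact gsNorm_sum_smul_le_coh_mul hq (fun n k => starRingEnd 𝕂 (u k n)) f
  · conv_lhs => rw [← hU.gft_inversion f]
    exact gsNorm_sum_smul_le_coh_mul hq u (gft u f)
  · obtain ⟨x, hx⟩ := exists_ne (0 : X)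
    obtain ⟨n, hn⟩ := exists_gsNorm_eq_coh hN q (fun n k => u k n)
    refine ⟨Pi.single n x, by simpa using hx, ?_⟩
    rw [gft_single, gsNorm_smul_const hq, gsNorm_conj, hn, gsNorm_single]

/-- operator norm of `𝓕 : L^1 → L^q` equals `κ_q(U*)`. -/
theorem gft_norm_one_to_q {𝕂 : Type*} [RCLike 𝕂] {X : Type*} [NormedAddCommGroup X]
    [NormedSpace 𝕂 X] [CompleteSpace X] {N : ℕ} (hN : 0 < N)
    (u : Fin N → Fin N → 𝕂) (hU : OrthoBasis u)
    (q : ℝ≥0∞) (hq : 1 ≤ q) :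
    (∀ f : Fin N → X, gsNorm q (gft u f) ≤ coh q (fun n k => u k n) * gsNorm 1 f) ∧
    (∀ f : Fin N → X, gsNorm q f ≤ coh q u * gsNorm 1 (gft u f)) ∧
    (Nontrivial X →
      ∃ f : Fin N → X, f ≠ 0 ∧ gsNorm q (gft u f) = coh q (fun n k => u k n) * gsNorm 1 f) :=
  gft_norm_one_to_q_general hN u hU q hq
end

section
/- Let N ≥ 2 and let X be a Banach space over 𝕂. Then the following are equivalent: (i) for every orthonormal basis B = {u_1,…,u_N} of 𝕂^N, the graph Fourier transform 𝓕 with respect to B satisfies ‖𝓕‖_{2→2} = 1, i.e., ‖f̂‖_2 ≤ ‖f‖_2 for every signal f : V → X (with the bound attained); (ii) the norm of X satisfies the parallelogram law ‖x+y‖² + ‖x−y‖² = 2‖x‖² + 2‖y‖² for all x, y ∈ X. -/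
open Finset
open scoped ENNReal

/-!
A norm with the parallelogram law comes from an inner product (Jordan–von Neumann), and then
`∑ k, ‖f̂ k‖²` expands into a Gram sum that the orthonormality of the columns of a unitary
matrix collapses to `∑ n, ‖f n‖²`. Conversely, the `2 × 2` Hadamard matrix padded by the
identity sends `(x, y, 0, …)` to `((x + y)/√2, (x - y)/√2, 0, …)`, so contractivity gives
`‖x + y‖² + ‖x - y‖² ≤ 2‖x‖² + 2‖y‖²`; applied to `x + y, x - y` this is the reverse inequality.
-/

open Matrix

lemma gsNorm_two_eq_sqrt {E : Type*} [NormedAddCommGroup E] {N : ℕ} (f : Fin N → E) :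
    gsNorm 2 f = √(∑ n, ‖f n‖ ^ 2) := by
  simp [gsNorm, Real.sqrt_eq_rpow]

section OrthoBasis

variable {𝕂 : Type*} [RCLike 𝕂] {N : ℕ} {u : Fin N → Fin N → 𝕂}

lemma orthoBasis_iff_mem_unitaryGroup :
    OrthoBasis u ↔ Matrix.of u ∈ unitaryGroup (Fin N) 𝕂 := by
  rw [mem_unitaryGroup_iff, ← Matrix.ext_iff, OrthoBasis, forall_comm]
  simp [Matrix.mul_apply, Matrix.one_apply, mul_comm, eq_comm]

lemma OrthoBasis.sum_conj_mul (hu : OrthoBasis u) (m n : Fin N) :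
    ∑ k, (starRingEnd 𝕂) (u k m) * u k n = if m = n then 1 else 0 := by
  have h := congrFun₂ (mem_unitaryGroup_iff'.1 (orthoBasis_iff_mem_unitaryGroup.1 hu)) m n
  simpa [Matrix.mul_apply, Matrix.one_apply] using h

variable {X : Type*} [NormedAddCommGroup X] [InnerProductSpace 𝕂 X]

lemma sum_norm_sq_gft (hu : OrthoBasis u) (f : Fin N → X) :
    ∑ k, ‖gft u f k‖ ^ 2 = ∑ n, ‖f n‖ ^ 2 := by
  have h : ∑ k, inner 𝕂 (gft u f k) (gft u f k) = ∑ n, inner 𝕂 (f n) (f n) := by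
    calc ∑ k, inner 𝕂 (gft u f k) (gft u f k)
        = ∑ n, ∑ m, (∑ k, (starRingEnd 𝕂) (u k m) * u k n) * inner 𝕂 (f n) (f m) := by
          simp_rw [gft, sum_inner, inner_sum, inner_smul_left, inner_smul_right,
            RCLike.conj_conj, Finset.sum_mul]
          rw [Finset.sum_comm]
          refine Finset.sum_congr rfl fun n _ => ?_
          exact Finset.sum_comm.trans (Finset.sum_congr rfl fun m _ =>
            Finset.sum_congr rfl fun k _ => by ring)
      _ = ∑ n, inner 𝕂 (f n) (f n) := by simp [hu.sum_conj_mul]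
  simpa only [map_sum, inner_self_eq_norm_sq] using congrArg RCLike.re h

lemma gsNorm_two_gft (hu : OrthoBasis u) (f : Fin N → X) :
    gsNorm 2 (gft u f) = gsNorm 2 f := by
  rw [gsNorm_two_eq_sqrt, gsNorm_two_eq_sqrt, sum_norm_sq_gft hu]

end OrthoBasis

section UnitaryGroup

variable {m n α : Type*} [Fintype m] [Fintype n] [DecidableEq m] [DecidableEq n]
  [CommRing α] [StarRing α]

lemma fromBlocks_zero_zero_mem_unitaryGroup {A : Matrix m m α} {B : Matrix n n α}
    (hA : A ∈ unitaryGroup m α) (hB : B ∈ unitaryGroup n α) :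
    fromBlocks A 0 0 B ∈ unitaryGroup (m ⊕ n) α := by
  rw [mem_unitaryGroup_iff, star_eq_conjTranspose, fromBlocks_conjTranspose,
    fromBlocks_multiply, ← star_eq_conjTranspose, ← star_eq_conjTranspose,
    mem_unitaryGroup_iff.1 hA, mem_unitaryGroup_iff.1 hB]
  simp

lemma reindex_mem_unitaryGroup (e : m ≃ n) {A : Matrix m m α}
    (hA : A ∈ unitaryGroup m α) : reindex e e A ∈ unitaryGroup n α := by
  rw [mem_unitaryGroup_iff, star_eq_conjTranspose, conjTranspose_reindex, reindex_apply,
    reindex_apply, submatrix_mul_equiv, ← star_eq_conjTranspose, mem_unitaryGroup_iff.1 hA,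
    submatrix_one_equiv]

end UnitaryGroup

lemma sum_norm_sq_append_zero {E : Type*} [NormedAddCommGroup E] {m : ℕ} (n : ℕ)
    (v : Fin m → E) : ∑ k, ‖Fin.append v (0 : Fin n → E) k‖ ^ 2 = ∑ i, ‖v i‖ ^ 2 := by
  simp [Fin.sum_univ_add]

section Hadamard

variable (𝕂 : Type*) [RCLike 𝕂]

noncomputable def hadamard2 : Matrix (Fin 2) (Fin 2) 𝕂 :=
  ((√2 : ℝ) : 𝕂)⁻¹ • !![1, 1; 1, -1]

lemma hadamard2_mem_unitaryGroup : hadamard2 𝕂 ∈ unitaryGroup (Fin 2) 𝕂 := by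
  have h : ((√2 : ℝ) : 𝕂)⁻¹ * ((√2 : ℝ) : 𝕂)⁻¹ = 2⁻¹ := by
    rw [← mul_inv, ← RCLike.ofReal_mul, Real.mul_self_sqrt zero_le_two, RCLike.ofReal_ofNat]
  rw [mem_unitaryGroup_iff]
  ext i j
  fin_cases i <;> fin_cases j <;>
    simp [hadamard2, Matrix.mul_apply, Fin.sum_univ_two, RCLike.conj_ofReal, h] <;> ring

noncomputable def hadamardPad (n : ℕ) : Matrix (Fin (2 + n)) (Fin (2 + n)) 𝕂 :=
  reindex finSumFinEquiv finSumFinEquiv (fromBlocks (hadamard2 𝕂) 0 0 1)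

lemma orthoBasis_hadamardPad (n : ℕ) : OrthoBasis (hadamardPad 𝕂 n) :=
  orthoBasis_iff_mem_unitaryGroup.2 <| reindex_mem_unitaryGroup _ <|
    fromBlocks_zero_zero_mem_unitaryGroup (hadamard2_mem_unitaryGroup 𝕂) (one_mem _)

variable {𝕂} {X : Type*} [NormedAddCommGroup X] [NormedSpace 𝕂 X]

lemma gft_hadamardPad (n : ℕ) (x y : X) :
    gft (hadamardPad 𝕂 n) (Fin.append ![x, y] 0) =
      Fin.append ![((√2 : ℝ) : 𝕂)⁻¹ • (x + y), ((√2 : ℝ) : 𝕂)⁻¹ • (x - y)] 0 := by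
  funext k
  refine Fin.addCases (fun i => ?_) (fun j => ?_) k
  · fin_cases i <;> simp [gft, Fin.sum_univ_add, hadamardPad, hadamard2, RCLike.conj_ofReal,
      smul_add, sub_eq_add_neg]
  · simp [gft, Fin.sum_univ_add, hadamardPad]

lemma sum_norm_sq_gft_hadamardPad (n : ℕ) (x y : X) :
    ∑ k, ‖gft (hadamardPad 𝕂 n) (Fin.append ![x, y] 0) k‖ ^ 2 =
      (‖x + y‖ ^ 2 + ‖x - y‖ ^ 2) / 2 := by
  rw [gft_hadamardPad, sum_norm_sq_append_zero]
  simp [Fin.sum_univ_two, norm_smul, mul_pow, -smul_add]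
  ring

end Hadamard

lemma parallelogram_of_le {𝕂 : Type*} [RCLike 𝕂] {E : Type*} [NormedAddCommGroup E]
    [NormedSpace 𝕂 E] (h : ∀ x y : E, ‖x + y‖ ^ 2 + ‖x - y‖ ^ 2 ≤ 2 * ‖x‖ ^ 2 + 2 * ‖y‖ ^ 2)
    (x y : E) : ‖x + y‖ ^ 2 + ‖x - y‖ ^ 2 = 2 * ‖x‖ ^ 2 + 2 * ‖y‖ ^ 2 := by
  have hxy := h (x + y) (x - y)
  have hx : ‖x + y + (x - y)‖ = 2 * ‖x‖ := by
    rw [show x + y + (x - y) = (2 : 𝕂) • x by module, norm_smul, RCLike.norm_ofNat]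
  have hy : ‖x + y - (x - y)‖ = 2 * ‖y‖ := by
    rw [show x + y - (x - y) = (2 : 𝕂) • y by module, norm_smul, RCLike.norm_ofNat]
  rw [hx, hy] at hxy
  linarith [h x y]

theorem gft_opnorm_one_iff_parallelogram_general {𝕂 : Type*} [RCLike 𝕂] {X : Type*}
    [NormedAddCommGroup X] [NormedSpace 𝕂 X] [Nontrivial X]
    {N : ℕ} (hN : 2 ≤ N) :
    ((∀ u : Fin N → Fin N → 𝕂, OrthoBasis u →
        (∀ f : Fin N → X, gsNorm 2 (gft u f) ≤ gsNorm 2 f) ∧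
        (∃ f : Fin N → X, f ≠ 0 ∧ gsNorm 2 (gft u f) = gsNorm 2 f)) ↔
      (∀ x y : X, ‖x + y‖ ^ 2 + ‖x - y‖ ^ 2 = 2 * ‖x‖ ^ 2 + 2 * ‖y‖ ^ 2)) := by
  constructor
  · intro hgft
    obtain ⟨n, rfl⟩ := Nat.exists_eq_add_of_le hN
    refine parallelogram_of_le (𝕂 := 𝕂) fun x y => ?_
    have h := (hgft _ (orthoBasis_hadamardPad 𝕂 n)).1 (Fin.append ![x, y] 0)
    rw [gsNorm_two_eq_sqrt, gsNorm_two_eq_sqrt, Real.sqrt_le_sqrt_iff (by positivity),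
      sum_norm_sq_gft_hadamardPad, sum_norm_sq_append_zero, Fin.sum_univ_two] at h
    simp only [Matrix.cons_val_zero, Matrix.cons_val_one] at h
    linarith
  · intro hpar u hu
    let : InnerProductSpace 𝕂 X := .ofNorm 𝕂 fun x y => by linear_combination hpar x y
    obtain ⟨x, hx⟩ := exists_ne (0 : X)
    exact ⟨fun f => (gsNorm_two_gft hu f).le, fun _ => x,
      fun h => hx (congrFun h ⟨0, by omega⟩), gsNorm_two_gft hu _⟩

/-- for `N ≥ 2` and `X` nontrivial, `‖𝓕‖_{2→2} = 1` for every orthonormal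
basis (i.e. `‖f̂‖_2 ≤ ‖f‖_2` for every signal, with the bound attained) iff the norm of
`X` satisfies the parallelogram law. -/
theorem gft_opnorm_one_iff_parallelogram {𝕂 : Type*} [RCLike 𝕂] {X : Type*}
    [NormedAddCommGroup X] [NormedSpace 𝕂 X] [CompleteSpace X] [Nontrivial X]
    {N : ℕ} (hN : 2 ≤ N) :
    ((∀ u : Fin N → Fin N → 𝕂, OrthoBasis u →
        (∀ f : Fin N → X, gsNorm 2 (gft u f) ≤ gsNorm 2 f) ∧
        (∃ f : Fin N → X, f ≠ 0 ∧ gsNorm 2 (gft u f) = gsNorm 2 f)) ↔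
      (∀ x y : X, ‖x + y‖ ^ 2 + ‖x - y‖ ^ 2 = 2 * ‖x‖ ^ 2 + 2 * ‖y‖ ^ 2)) :=
  gft_opnorm_one_iff_parallelogram_general hN
end

section
/- Let s, t, w ∈ [1,∞] with 1/s + 1/t + 1/w = 1 and let p, q ∈ [1,∞], with p' the conjugate exponent of p. Then for every m ∈ V and every signal f : V → X, ‖T_m f‖_q ≤ ‖U*‖_{s,q} · ‖U‖_{∞,t} · ‖U‖_{p',w} · ‖f‖_p. In particular T_m : L^p(V,X) → L^q(V,X) is a continuous linear operator. -/
/-!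
Expanding the Fourier coefficients, `T_m f (n) = ∑ₖ u_k(n) conj(u_k(m)) f̂(k)`. Hölder gives
`‖f̂(k)‖ ≤ ‖u_k‖_{p'} ‖f‖_p`, and Hölder with three exponents `1/s + 1/t + 1/w = 1`, together with
`|u_k(m)| ≤ ‖u_k‖_∞`, bounds `‖T_m f (n)‖` by `‖u(n)‖_s ‖U‖_{∞,t} ‖U‖_{p',w} ‖f‖_p`; the `ℓ^q` norm
in `n` of the right-hand side is the claimed bound. Finite `ℓ^p` norms are read as `L^p` norms for
counting measure, so that Mathlib's Hölder inequality covers the infinite exponents as well.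
-/

open Finset
open scoped ENNReal

open MeasureTheory ENNReal

section GsNorm

variable {E : Type*} [NormedAddCommGroup E] {N : ℕ} {p : ℝ≥0∞}

lemma eLpNorm_count_ne_top (p : ℝ≥0∞) (f : Fin N → E) : eLpNorm f p Measure.count ≠ ∞ :=
  MemLp.of_discrete.eLpNorm_ne_top

lemma gsNorm_eq_toReal_eLpNorm (hp : p ≠ 0) (f : Fin N → E) :
    gsNorm p f = (eLpNorm f p Measure.count).toReal := by
  rcases eq_or_ne p ∞ with rfl | hpt
  · rw [gsNorm, if_pos rfl, eLpNorm_exponent_top, eLpNormEssSup_count,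
      ENNReal.toReal_iSup fun n => enorm_ne_top]
    simp
  · rw [gsNorm, if_neg hpt, eLpNorm_eq_lintegral_rpow_enorm_toReal hp hpt, lintegral_count,
      tsum_fintype, ← ENNReal.toReal_rpow,
      ENNReal.toReal_sum fun n _ => ENNReal.rpow_ne_top_of_nonneg toReal_nonneg enorm_ne_top]
    simp [← ENNReal.toReal_rpow]

lemma gsNorm_nonneg (p : ℝ≥0∞) (f : Fin N → E) : 0 ≤ gsNorm p f := by
  unfold gsNorm
  split_ifs
  · exact Real.iSup_nonneg fun n => norm_nonneg _
  · exact Real.rpow_nonneg (Finset.sum_nonneg fun n _ => by positivity) _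

lemma gsNorm_congr_norm {F : Type*} [NormedAddCommGroup F] {f : Fin N → E} {g : Fin N → F}
    (h : ∀ n, ‖f n‖ = ‖g n‖) : gsNorm p f = gsNorm p g := by
  simp only [gsNorm, h]

lemma norm_le_gsNorm_top (f : Fin N → E) (n : Fin N) : ‖f n‖ ≤ gsNorm ∞ f := by
  rw [gsNorm, if_pos rfl]
  exact le_ciSup (f := fun n => ‖f n‖) (Set.finite_range _).bddAbove n

lemma norm_sum_le_gsNorm_one (f : Fin N → E) : ‖∑ n, f n‖ ≤ gsNorm 1 f := by
  simpa [gsNorm] using norm_sum_le Finset.univ f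

lemma gsNorm_mono_real (hp : p ≠ 0) {f : Fin N → E} {g : Fin N → ℝ} (h : ∀ n, ‖f n‖ ≤ g n) :
    gsNorm p f ≤ gsNorm p g := by
  rw [gsNorm_eq_toReal_eLpNorm hp, gsNorm_eq_toReal_eLpNorm hp]
  exact ENNReal.toReal_mono (eLpNorm_count_ne_top p g) (eLpNorm_mono_real h)

lemma gsNorm_mul_const (hp : p ≠ 0) (g : Fin N → ℝ) {c : ℝ} (hc : 0 ≤ c) :
    gsNorm p (fun n => g n * c) = gsNorm p g * c := by
  have : (fun n => g n * c) = c • g := funext fun n => mul_comm _ _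
  rw [this, gsNorm_eq_toReal_eLpNorm hp, gsNorm_eq_toReal_eLpNorm hp, eLpNorm_const_smul,
    ENNReal.toReal_mul, Real.enorm_eq_ofReal hc, ENNReal.toReal_ofReal hc, mul_comm]

end GsNorm

lemma ENNReal.HolderTriple.left_ne_zero (p q : ℝ≥0∞) {r : ℝ≥0∞} [HolderTriple p q r]
    (hr : r ≠ 0) : p ≠ 0 := by
  rintro rfl
  exact hr (nonpos_iff_eq_zero.1 (HolderTriple.le 0 q r))

section Holder

variable {𝕂 : Type*} [RCLike 𝕂] {X : Type*} [NormedAddCommGroup X] [NormedSpace 𝕂 X] {N : ℕ}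

lemma gsNorm_smul_le {p q r : ℝ≥0∞} [HolderTriple p q r] (hr : r ≠ 0) (a : Fin N → 𝕂)
    (f : Fin N → X) : gsNorm r (a • f) ≤ gsNorm p a * gsNorm q f := by
  rw [gsNorm_eq_toReal_eLpNorm hr, gsNorm_eq_toReal_eLpNorm (HolderTriple.left_ne_zero p q hr),
    gsNorm_eq_toReal_eLpNorm (HolderTriple.left_ne_zero q p hr), ← ENNReal.toReal_mul]
  exact ENNReal.toReal_mono
    (ENNReal.mul_ne_top (eLpNorm_count_ne_top _ _) (eLpNorm_count_ne_top _ _))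
    (eLpNorm_smul_le_mul_eLpNorm .of_discrete .of_discrete)

lemma norm_sum_smul_le {p q : ℝ≥0∞} [HolderConjugate p q] (a : Fin N → 𝕂) (f : Fin N → X) :
    ‖∑ n, a n • f n‖ ≤ gsNorm p a * gsNorm q f :=
  (norm_sum_le_gsNorm_one (a • f)).trans (gsNorm_smul_le one_ne_zero a f)

lemma norm_sum_mul_smul_le {s t w : ℝ≥0∞} (hstw : s⁻¹ + t⁻¹ + w⁻¹ = 1) (a b : Fin N → 𝕂)
    (f : Fin N → X) : ‖∑ n, (a n * b n) • f n‖ ≤ gsNorm s a * gsNorm t b * gsNorm w f := by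
  have htw : HolderTriple t w (t⁻¹ + w⁻¹)⁻¹ := .of t w
  have hs : HolderConjugate s (t⁻¹ + w⁻¹)⁻¹ := ⟨by rw [inv_inv, inv_one, ← add_assoc, hstw]⟩
  calc ‖∑ n, (a n * b n) • f n‖ = ‖∑ n, a n • (b • f) n‖ := by simp only [mul_smul]; rfl
    _ ≤ gsNorm s a * gsNorm (t⁻¹ + w⁻¹)⁻¹ (b • f) := norm_sum_smul_le a (b • f)
    _ ≤ gsNorm s a * (gsNorm t b * gsNorm w f) := by
        gcongr
        · exact gsNorm_nonneg s a
        · exact gsNorm_smul_le (HolderTriple.left_ne_zero _ s one_ne_zero) b f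
    _ = gsNorm s a * gsNorm t b * gsNorm w f := (mul_assoc _ _ _).symm

end Holder

section Translation

variable {𝕂 : Type*} [RCLike 𝕂] {X : Type*} [NormedAddCommGroup X] [NormedSpace 𝕂 X] {N : ℕ}

lemma norm_gft_le {p q : ℝ≥0∞} [HolderConjugate p q] (u : Fin N → Fin N → 𝕂) (f : Fin N → X)
    (k : Fin N) : ‖gft u f k‖ ≤ gsNorm p (u k) * gsNorm q f := by
  rw [← gsNorm_congr_norm (f := fun n => starRingEnd 𝕂 (u k n)) fun n => RCLike.norm_conj _]
  exact norm_sum_smul_le _ f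

lemma norm_gtrans_apply_le {s t w p p' : ℝ≥0∞} (hstw : s⁻¹ + t⁻¹ + w⁻¹ = 1)
    [HolderConjugate p' p] (u : Fin N → Fin N → 𝕂) (m : Fin N) (f : Fin N → X) (n : Fin N) :
    ‖gtrans u m f n‖ ≤
      gsNorm s (fun k => u k n) * (mixNorm ∞ t u * (mixNorm p' w u * gsNorm p f)) := by
  have ht : t ≠ 0 := by rintro rfl; simp at hstw
  have hw : w ≠ 0 := by rintro rfl; simp at hstw
  have hcoh : gsNorm t (fun k => starRingEnd 𝕂 (u k m)) ≤ mixNorm ∞ t u :=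
    gsNorm_mono_real ht fun k => (RCLike.norm_conj _).trans_le (norm_le_gsNorm_top (u k) m)
  have hgft : gsNorm w (gft u f) ≤ mixNorm p' w u * gsNorm p f := by
    rw [mixNorm, ← gsNorm_mul_const hw _ (gsNorm_nonneg p f)]
    exact gsNorm_mono_real hw (norm_gft_le u f)
  calc ‖gtrans u m f n‖
      ≤ gsNorm s (fun k => u k n) * gsNorm t (fun k => starRingEnd 𝕂 (u k m)) *
          gsNorm w (gft u f) := norm_sum_mul_smul_le hstw _ _ _
    _ ≤ gsNorm s (fun k => u k n) * mixNorm ∞ t u * (mixNorm p' w u * gsNorm p f) :=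
        mul_le_mul (mul_le_mul_of_nonneg_left hcoh (gsNorm_nonneg _ _)) hgft (gsNorm_nonneg _ _)
          (mul_nonneg (gsNorm_nonneg _ _) (gsNorm_nonneg _ _))
    _ = _ := mul_assoc _ _ _

lemma continuous_gtrans (u : Fin N → Fin N → 𝕂) (m : Fin N) :
    Continuous (gtrans (X := X) u m) := by
  unfold gtrans gft
  fun_prop

end Translation

theorem gtrans_continuity_general {𝕂 : Type*} [RCLike 𝕂] {X : Type*} [NormedAddCommGroup X]
    [NormedSpace 𝕂 X] {N : ℕ}
    (u : Fin N → Fin N → 𝕂) (m : Fin N)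
    (s t w : ℝ≥0∞)
    (hstw : 1 / s + 1 / t + 1 / w = 1)
    (p p' q : ℝ≥0∞) (hq : 1 ≤ q) (hpp' : 1 / p + 1 / p' = 1) :
    (∀ f : Fin N → X, gsNorm q (gtrans u m f) ≤
      mixNorm s q (fun n k => u k n) * mixNorm ∞ t u * mixNorm p' w u * gsNorm p f) ∧
    Continuous (gtrans (X := X) u m) := by
  have hq0 : q ≠ 0 := (zero_lt_one.trans_le hq).ne'
  have : HolderConjugate p' p :=
    holderConjugate_iff.2 (by simpa only [one_div, add_comm] using hpp')
  simp only [one_div] at hstw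
  refine ⟨fun f => ?_, continuous_gtrans u m⟩
  set C := mixNorm ∞ t u * (mixNorm p' w u * gsNorm p f) with hC_def
  have hC : 0 ≤ C :=
    mul_nonneg (gsNorm_nonneg _ _) (mul_nonneg (gsNorm_nonneg _ _) (gsNorm_nonneg _ _))
  calc gsNorm q (gtrans u m f) ≤ gsNorm q (fun n => gsNorm s (fun k => u k n) * C) :=
        gsNorm_mono_real hq0 (norm_gtrans_apply_le hstw u m f)
    _ = mixNorm s q (fun n k => u k n) * C := gsNorm_mul_const hq0 _ hC
    _ = _ := by rw [hC_def]; ring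

/-- `‖T_m f‖_q ≤ ‖U*‖_{s,q}·‖U‖_{∞,t}·‖U‖_{p',w}·‖f‖_p`; in particular
`T_m` is a continuous linear operator. -/
theorem gtrans_continuity {𝕂 : Type*} [RCLike 𝕂] {X : Type*} [NormedAddCommGroup X]
    [NormedSpace 𝕂 X] [CompleteSpace X] {N : ℕ} (hN : 0 < N)
    (u : Fin N → Fin N → 𝕂) (hU : OrthoBasis u) (m : Fin N)
    (s t w : ℝ≥0∞) (hs : 1 ≤ s) (ht : 1 ≤ t) (hw : 1 ≤ w)
    (hstw : 1 / s + 1 / t + 1 / w = 1)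
    (p p' q : ℝ≥0∞) (hp : 1 ≤ p) (hq : 1 ≤ q) (hpp' : 1 / p + 1 / p' = 1) :
    (∀ f : Fin N → X, gsNorm q (gtrans u m f) ≤
      mixNorm s q (fun n k => u k n) * mixNorm ∞ t u * mixNorm p' w u * gsNorm p f) ∧
    Continuous (gtrans (X := X) u m) :=
  gtrans_continuity_general u m s t w hstw p p' q hq hpp'
end
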